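/- arXiv:1912.04653 — 6 statements merged into one kernel-verified Lean document; each statement's English description precedes it below -/
import Mathlib

section
/- Let p be an odd prime and let ν_p = max over γ ∈ F_p \ {1} of the cardinality of {1 ≤ i ≤ p−2 : γ^{i+1} = i(1−γ) + 1 in F_p}. Then 0 ≤ ν_p ≤ √(3p/2 − 39/16) + 5/4 (as an inequality of real numbers). -/
/-!
If `i < j` both solve `γ^(i+1) = i(1-γ) + 1` with `γ ≠ 1`, then
`γ^(i+1) (γ^(j-i) - 1) = (j-i)(1-γ) ≠ 0`, so the gap `j - i` determines `γ^(i+1)`, hence `i` modulo `p`.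
The solutions in `[1, p-2]` therefore have pairwise distinct differences. Listing them as
`a₀ < ⋯ < a_{k-1}`, the `2k-3` differences `a_{i+1} - a_i` and `a_{i+2} - a_i` are distinct positive
integers, so their sum is at least `(2k-3)(2k-2)/2`, while it telescopes to at most `3(p-3)`.
Solving `(2k-3)(k-1) ≤ 3(p-3)` for `k` gives the bound.
-/

open Polynomial

noncomputable def carlitzChain {F : Type*} [Field F] (q : ℕ) (a : ℕ → F) : ℕ → F[X]
  | 0 => C (a 0) * X + C (a 1)
  | n + 1 => carlitzChain q a n ^ (q - 2) + C (a (n + 2))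

/-- `f` is congruent mod `X^q - X` to a Carlitz chain of length `n`. -/
def IsCarlitzRep {F : Type*} [Field F] (q : ℕ) (f : F[X]) (n : ℕ) : Prop :=
  ∃ a : ℕ → F, a 0 ≠ 0 ∧ (∀ i, 2 ≤ i → i ≤ n → a i ≠ 0) ∧
    (X ^ q - X : F[X]) ∣ f - carlitzChain q a n

/-- The Carlitz rank of a permutation polynomial. -/
noncomputable def carlitzRank {F : Type*} [Field F] (q : ℕ) (f : F[X]) : ℕ :=
  sInf {n | IsCarlitzRep q f n}

/-- The weight: number of nonzero coefficients of the reduction of `f` mod `X^q - X`. -/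
noncomputable def polyWeight {F : Type*} [Field F] (q : ℕ) (f : F[X]) : ℕ :=
  (f %ₘ (X ^ q - X)).support.card

/-- `ν_p` from the paper. -/
noncomputable def nuP (p : ℕ) [Fact p.Prime] : ℕ :=
  Finset.sup (Finset.univ.erase (1 : ZMod p)) fun γ =>
    ((Finset.Icc 1 (p - 2)).filter
      (fun i : ℕ => γ ^ (i + 1) = (i : ZMod p) * (1 - γ) + 1)).card

open Finset

theorem Finset.card_mul_card_add_one_le_two_mul_sum (S : Finset ℕ) (hS : 0 ∉ S) :
    #S * (#S + 1) ≤ 2 * ∑ x ∈ S, x := by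
  induction S using Finset.induction_on_max with
  | empty => simp
  | insert a S hlt ih =>
    have hS' : 0 ∉ S := fun h => hS (mem_insert_of_mem h)
    have hcard : #S + 1 ≤ a := by
      have : S ⊆ Ioo 0 a := fun x hx =>
        mem_Ioo.2 ⟨Nat.pos_of_ne_zero (by rintro rfl; exact hS' hx), hlt x hx⟩
      have := card_le_card this
      have ha0 : a ≠ 0 := fun h => hS (h ▸ mem_insert_self a S)
      rw [Nat.card_Ioo] at this
      omega
    have ha : a ∉ S := fun h => (hlt a h).false
    rw [card_insert_of_notMem ha, sum_insert ha]
    nlinarith [ih hS']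

theorem Finset.sum_range_tsub_of_monotoneOn {f : ℕ → ℕ} {n : ℕ} (hf : MonotoneOn f (Set.Iic n)) :
    ∑ i ∈ range n, (f (i + 1) - f i) = f n - f 0 := by
  induction n with
  | zero => simp
  | succ n ih =>
    rw [sum_range_succ, ih (hf.mono (Set.Iic_subset_Iic.2 n.le_succ))]
    have h0 : f 0 ≤ f n := hf (by simp) (by simp) (Nat.zero_le n)
    have h1 : f n ≤ f (n + 1) := hf (by simp) (by simp) n.le_succ
    omega

def HasDistinctDifferences (A : Finset ℕ) : Prop :=
  ∀ x ∈ A, ∀ y ∈ A, ∀ u ∈ A, ∀ v ∈ A, x < y → u < v → y - x = v - u → x = u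

theorem sum_gaps_add_sum_gaps_two_le {a : ℕ → ℕ} {k : ℕ} (ha : MonotoneOn a (Set.Iio k))
    (hk : 2 ≤ k) :
    ∑ i ∈ range (k - 1), (a (i + 1) - a i) + ∑ i ∈ range (k - 2), (a (i + 2) - a i) ≤
      3 * (a (k - 1) - a 0) := by
  have mono : ∀ {i j}, i ≤ j → j < k → a i ≤ a j := fun hij hj =>
    ha (by simp; omega) (by simpa using hj) hij
  have gaps := sum_range_tsub_of_monotoneOn (f := a) (n := k - 1)
    (ha.mono fun i hi => by simp at hi ⊢; omega)
  have gaps_two : ∑ i ∈ range (k - 2), (a (i + 2) - a i) = a (k - 1) + a (k - 2) - (a 1 + a 0) := by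
    have := sum_range_tsub_of_monotoneOn (f := fun i => a (i + 1) + a i) (n := k - 2)
      fun i hi j hj hij => by
        simp only [Set.mem_Iic] at hi hj
        exact add_le_add (mono (by omega) (by omega)) (mono hij (by omega))
    simp only [add_assoc, Nat.reduceAdd, zero_add, show k - 2 + 1 = k - 1 by omega] at this
    rw [← this]
    refine sum_congr rfl fun i hi => ?_
    have := mono (i.le_succ) (by simp at hi; omega)
    have := mono ((i + 1).le_succ) (by simp at hi; omega)
    omega
  have := mono (Nat.zero_le 1) (by omega)
  have := mono (by omega : k - 2 ≤ k - 1) (by omega)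
  omega

theorem HasDistinctDifferences.card_bound {A : Finset ℕ} (hA : HasDistinctDifferences A) {w : ℕ}
    (hw : ∀ x ∈ A, ∀ y ∈ A, y - x ≤ w) : (2 * #A - 3) * (#A - 1) ≤ 3 * w := by
  set k := #A
  rcases Nat.lt_or_ge k 2 with hk2 | hk2
  · interval_cases k <;> simp
  set a := Nat.nth (· ∈ A)
  have hf : (Set.ofPred (· ∈ A)).Finite := A.finite_toSet
  have hk : #hf.toFinset = k := by simp [k]
  have mem : ∀ i < k, a i ∈ A := fun i hi => Nat.nth_mem_of_lt_card hf (hk ▸ hi)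
  have hmono : StrictMonoOn a (Set.Iio k) := hk ▸ Nat.nth_strictMonoOn hf
  have lt : ∀ {i j}, i < j → j < k → a i < a j := fun hij hj =>
    hmono (by simp; omega) (by simpa using hj) hij
  have index_eq : ∀ {i j i' j'}, i < j → j < k → i' < j' → j' < k →
      a j - a i = a j' - a i' → i = i' ∧ j = j' := by
    intro i j i' j' hij hj hij' hj' h
    have hx := hA _ (mem i (by omega)) _ (mem j hj) _ (mem i' (by omega)) _ (mem j' hj')
      (lt hij hj) (lt hij' hj') h
    have hy : a j = a j' := by have := lt hij hj; have := lt hij' hj'; omega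
    exact ⟨hmono.injOn (by simp; omega) (by simp; omega) hx,
      hmono.injOn (by simpa using hj) (by simpa using hj') hy⟩
  let f : ℕ ⊕ ℕ → ℕ := Sum.elim (fun i => a (i + 1) - a i) (fun i => a (i + 2) - a i)
  let T := (range (k - 1)).disjSum (range (k - 2))
  have hinj : Set.InjOn f T := by
    rintro (i | i) hi (j | j) hj h <;>
      simp only [T, f, mem_coe, inl_mem_disjSum, inr_mem_disjSum, mem_range, Sum.elim_inl,
        Sum.elim_inr, Sum.inl.injEq, Sum.inr.injEq, reduceCtorEq] at hi hj h ⊢ <;>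
      have := index_eq (by omega) (by omega) (by omega) (by omega) h <;>
      omega
  have hpos : 0 ∉ T.image f := by
    simp only [mem_image, not_exists, not_and]
    rintro (i | i) hi <;>
      simp only [T, f, inl_mem_disjSum, inr_mem_disjSum, mem_range, Sum.elim_inl,
        Sum.elim_inr] at hi ⊢
    · have := lt (by omega : i < i + 1) (by omega); omega
    · have := lt (by omega : i < i + 2) (by omega); omega
  have hsum : ∑ x ∈ T.image f, x ≤ 3 * w := by
    rw [sum_image hinj, sum_disjSum]
    simp only [f, Sum.elim_inl, Sum.elim_inr]
    have := hw _ (mem 0 (by omega)) _ (mem (k - 1) (by omega))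
    have := sum_gaps_add_sum_gaps_two_le hmono.monotoneOn hk2
    omega
  have := (T.image f).card_mul_card_add_one_le_two_mul_sum hpos
  rw [card_image_of_injOn hinj, card_disjSum, card_range, card_range,
    show k - 1 + (k - 2) = 2 * k - 3 by omega, show 2 * k - 3 + 1 = 2 * (k - 1) by omega] at this
  nlinarith

theorem natCast_eq_of_solutions_same_gap {K : Type*} [Field K] {γ : K}
    (hγ : γ ≠ 1) {a c d : ℕ} (hd : (d : K) ≠ 0)
    (ha : γ ^ (a + 1) = a * (1 - γ) + 1) (had : γ ^ (a + d + 1) = ((a + d : ℕ) : K) * (1 - γ) + 1)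
    (hc : γ ^ (c + 1) = c * (1 - γ) + 1) (hcd : γ ^ (c + d + 1) = ((c + d : ℕ) : K) * (1 - γ) + 1) :
    (a : K) = c := by
  have h1γ : 1 - γ ≠ 0 := sub_ne_zero.2 hγ.symm
  have shift : ∀ b : ℕ, γ ^ (b + 1) = b * (1 - γ) + 1 →
      γ ^ (b + d + 1) = ((b + d : ℕ) : K) * (1 - γ) + 1 → γ ^ (b + 1) * (γ ^ d - 1) = d * (1 - γ) := by
    intro b hb hbd
    rw [add_right_comm, pow_add] at hbd
    push_cast at hbd
    linear_combination hbd - hb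
  have hne : γ ^ d - 1 ≠ 0 := by
    intro h
    have key := shift a ha had
    rw [h, mul_zero] at key
    exact mul_ne_zero hd h1γ key.symm
  have hpow : γ ^ (a + 1) = γ ^ (c + 1) :=
    mul_right_cancel₀ hne ((shift a ha had).trans (shift c hc hcd).symm)
  exact mul_right_cancel₀ h1γ (by linear_combination hpow - ha + hc)

def nuSet (p : ℕ) (γ : ZMod p) : Finset ℕ :=
  (Icc 1 (p - 2)).filter fun i : ℕ => γ ^ (i + 1) = (i : ZMod p) * (1 - γ) + 1

theorem hasDistinctDifferences_nuSet {p : ℕ} [Fact p.Prime] {γ : ZMod p} (hγ : γ ≠ 1) :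
    HasDistinctDifferences (nuSet p γ) := by
  intro x hx y hy u hu v hv hxy huv hdiff
  simp only [nuSet, mem_filter, mem_Icc] at hx hy hu hv
  obtain ⟨d, rfl⟩ := Nat.exists_eq_add_of_le hxy.le
  obtain rfl : v = u + d := by omega
  have hd : (d : ZMod p) ≠ 0 := by
    intro h
    have := ZMod.val_natCast_of_lt (by omega : d < p)
    rw [h, ZMod.val_zero] at this
    omega
  have hcast := natCast_eq_of_solutions_same_gap hγ hd hx.2 hy.2 hu.2 hv.2
  rw [← ZMod.val_natCast_of_lt (by omega : x < p), hcast, ZMod.val_natCast_of_lt (by omega)]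

theorem le_sqrt_of_mul_le {k p : ℕ} (h : (2 * k - 3) * (k - 1) ≤ 3 * (p - 3)) :
    (k : ℝ) ≤ √(3 * p / 2 - 39 / 16) + 5 / 4 := by
  rcases Nat.lt_or_ge k 2 with hk | hk
  · have : (k : ℝ) ≤ 1 := by exact_mod_cast Nat.le_of_lt_succ hk
    linarith [Real.sqrt_nonneg (3 * p / 2 - 39 / 16)]
  have hp : 4 ≤ p := by
    have : 0 < (2 * k - 3) * (k - 1) := Nat.mul_pos (by omega) (by omega)
    omega
  have hR : (2 * (k : ℝ) - 3) * (k - 1) ≤ 3 * (p - 3) := by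
    have := h
    zify [(by omega : 3 ≤ 2 * k), (by omega : 1 ≤ k), (by omega : 3 ≤ p)] at this
    exact_mod_cast this
  have hsq : ((k : ℝ) - 5 / 4) ^ 2 ≤ 3 * p / 2 - 39 / 16 := by nlinarith
  linarith [Real.abs_le_sqrt hsq, le_abs_self ((k : ℝ) - 5 / 4)]

theorem nuP_le_general {p : ℕ} [Fact p.Prime] :
    0 ≤ (nuP p : ℝ) ∧ (nuP p : ℝ) ≤ Real.sqrt (3 * p / 2 - 39 / 16) + 5 / 4 := by
  refine ⟨Nat.cast_nonneg _, ?_⟩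
  obtain ⟨γ, hγ, hsup⟩ := exists_mem_eq_sup (univ.erase (1 : ZMod p))
    ⟨0, mem_erase.2 ⟨zero_ne_one, mem_univ 0⟩⟩ fun γ => #(nuSet p γ)
  have hwidth : ∀ x ∈ nuSet p γ, ∀ y ∈ nuSet p γ, y - x ≤ p - 3 := by
    intro x hx y hy
    simp only [nuSet, mem_filter, mem_Icc] at hx hy
    omega
  have hnu : nuP p = #(nuSet p γ) := hsup
  rw [hnu]
  exact le_sqrt_of_mul_le ((hasDistinctDifferences_nuSet (ne_of_mem_erase hγ)).card_bound hwidth)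

/-- **Bound on `ν_p`.** For `p` an odd prime, `0 ≤ ν_p ≤ √(3p/2 - 39/16) + 5/4`. -/
theorem nuP_le {p : ℕ} [Fact p.Prime] (hp : Odd p) :
    0 ≤ (nuP p : ℝ) ∧ (nuP p : ℝ) ≤ Real.sqrt (3 * p / 2 - 39 / 16) + 5 / 4 :=
  nuP_le_general
end

section
/- Let F_q be a finite field with odd characteristic p and let f be a permutation polynomial of F_q with Carlitz rank Crk(f) = 1. Then ω(f) ∈ {1, 2, q − q/p, q − q/p − 1}. -/
/-! A rank-one Carlitz chain is `(a₀x + a₁)^(q-2) + a₂`; its degree is below `q`, so it is its own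
reduction mod `x^q - x`. For `a₁ = 0` it is a monomial or a binomial. Otherwise
`a₀x + a₁ = a₁(1 + t)` with `t = (a₀/a₁)x`, and `(1 + t)^(q-2)` is the truncation of
`(1 + t)^(-2) = ∑ (-1)^k (k+1) t^k` below degree `q - 1`: multiplied by `(1 + t)^2`, that truncation
gives `1 + t^q = (1 + t)^q` in characteristic `p`. So the coefficient of `x^k`, `0 < k < q - 1`,
vanishes exactly when `p ∣ k + 1`, which leaves `q - q/p` nonzero coefficients, one fewer if the
constant term cancels. -/

open Polynomial

open Finset

section

variable {R : Type*} [CommRing R]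

theorem one_add_sq_mul_sum_range_add_neg_one_pow (t : R) (N : ℕ) :
    (1 + t) ^ 2 * ∑ k ∈ range N, (-1) ^ k * (k + 1 : R) * t ^ k
      + (-1) ^ N * ((N + 1 : R) * t ^ N + N * t ^ (N + 1)) = 1 := by
  induction N with
  | zero => simp
  | succ N ih =>
    rw [sum_range_succ]
    push_cast
    linear_combination ih

theorem one_add_pow_char_pow_sub_two [IsDomain R] {p : ℕ} [Fact p.Prime] [CharP R p] {n : ℕ}
    (hn : n ≠ 0) {t : R} (ht : 1 + t ≠ 0) :
    (1 + t) ^ (p ^ n - 2) = ∑ k ∈ range (p ^ n - 1), (-1) ^ k * (k + 1 : R) * t ^ k := by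
  have hq : 2 ≤ p ^ n := (Fact.out : p.Prime).two_le.trans (Nat.le_self_pow hn p)
  have hq0 : ((p ^ n : ℕ) : R) = 0 := by
    rw [CharP.cast_eq_zero_iff R p]; exact dvd_pow_self p hn
  have hcast : ((p ^ n - 1 : ℕ) : R) = -1 := by
    rw [Nat.cast_sub (by omega), hq0]; simp
  have hsign : (-1 : R) ^ (p ^ n - 1) * (-1) = -1 := by
    rw [← pow_succ, Nat.sub_add_cancel (by omega), neg_one_pow_char_pow]
  have key := one_add_sq_mul_sum_range_add_neg_one_pow t (p ^ n - 1)
  rw [hcast, Nat.sub_add_cancel (by omega)] at key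
  refine mul_left_cancel₀ (pow_ne_zero 2 ht) ?_
  rw [← pow_add, Nat.add_sub_cancel' hq, add_pow_char_pow, one_pow]
  linear_combination -key + t ^ p ^ n * hsign

end

theorem card_eq_or_eq_sub_one_of_erase_eq {α : Type*} [DecidableEq α] {s t : Finset α} {x : α}
    (h : s.erase x = t.erase x) (hx : x ∈ t) : #s = #t ∨ #s = #t - 1 := by
  by_cases hs : x ∈ s
  · left
    rw [← card_erase_add_one hs, ← card_erase_add_one hx, h]
  · right
    rw [← erase_eq_of_notMem hs, h, card_erase_of_mem hx]

theorem card_filter_range_sub_one_not_dvd_succ {p q : ℕ} (hpq : p ∣ q) (hq : 0 < q) :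
    #{j ∈ range (q - 1) | ¬ p ∣ j + 1} = q - q / p := by
  obtain ⟨m, rfl⟩ := hpq
  have hp : 0 < p := Nat.pos_of_mul_pos_right hq
  have hm : 0 < m := Nat.pos_of_mul_pos_left hq
  have hdiv : (p * m - 1) / p = m - 1 := by
    obtain ⟨k, rfl⟩ : ∃ k, m = k + 1 := ⟨m - 1, by omega⟩
    rw [Nat.add_sub_cancel]
    have h1 : p * (k + 1) = k * p + p := by ring
    have h2 : (k + 1) * p = k * p + p := by ring
    exact Nat.div_eq_of_lt_le (by omega) (by omega)
  have hsplit := card_filter_add_card_filter_not (s := range (p * m - 1)) (p ∣ · + 1)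
  rw [Nat.card_multiples, card_range, hdiv] at hsplit
  rw [Nat.mul_div_cancel_left m hp]
  omega

section

variable {F : Type*} [Field F]

theorem coeff_C_mul_X_add_C_pow_char_pow_sub_two {p : ℕ} [Fact p.Prime] [CharP F p] {n : ℕ}
    (hn : n ≠ 0) (a : F) {b : F} (hb : b ≠ 0) (j : ℕ) :
    ((C a * X + C b) ^ (p ^ n - 2)).coeff j =
      if j < p ^ n - 1 then b ^ (p ^ n - 2) * ((-1) ^ j * (j + 1) * (a / b) ^ j) else 0 := by
  have hfactor : C a * X + C b = C b * (1 + C (a / b) * X) := by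
    rw [mul_add, ← mul_assoc, ← C_mul, mul_div_cancel₀ _ hb]; ring
  have hne : (1 + C (a / b) * X : F[X]) ≠ 0 := fun h => by simpa using congrArg (coeff · 0) h
  have hterm : ∀ k : ℕ, ((-1) ^ k * (k + 1 : F[X]) * (C (a / b) * X) ^ k) =
      C ((-1) ^ k * (k + 1) * (a / b) ^ k) * X ^ k := by
    intro k; simp only [mul_pow, C_mul, C_pow, C_neg, C_1, C_add, map_natCast]; ring
  rw [hfactor, mul_pow, ← C_pow, one_add_pow_char_pow_sub_two hn hne, coeff_C_mul,
    finsetSum_coeff]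
  simp only [hterm, coeff_C_mul_X_pow, sum_ite_eq, mem_range]
  split_ifs <;> simp

theorem support_C_mul_X_add_C_pow_char_pow_sub_two_add_C_erase_zero {p : ℕ} [Fact p.Prime]
    [CharP F p] {n : ℕ} (hn : n ≠ 0) {a b : F} (ha : a ≠ 0) (hb : b ≠ 0) (d : F) :
    ((C a * X + C b) ^ (p ^ n - 2) + C d).support.erase 0 =
      {j ∈ range (p ^ n - 1) | ¬ p ∣ j + 1}.erase 0 := by
  ext j
  simp only [mem_erase, mem_support_iff, mem_filter, mem_range, coeff_add, coeff_C,
    coeff_C_mul_X_add_C_pow_char_pow_sub_two hn a hb, and_congr_right_iff]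
  intro hj
  rw [if_neg hj, add_zero]
  split_ifs with hlt
  · have hchar : (j + 1 : F) = 0 ↔ p ∣ j + 1 := by exact_mod_cast CharP.cast_eq_zero_iff F p (j + 1)
    simp [hlt, ha, hb, hchar]
  · simp [hlt]

theorem polyWeight_eq_card_support_of_dvd_sub {q : ℕ} (hq : 1 < q) {f g : F[X]}
    (h : X ^ q - X ∣ f - g) (hg : g.natDegree < q) : polyWeight q f = #g.support := by
  have hmonic : (X ^ q - X : F[X]).Monic := monic_X_pow_sub (by rw [degree_X]; exact_mod_cast hq)
  rw [polyWeight, modByMonic_eq_of_dvd_sub hmonic h, (modByMonic_eq_self_iff hmonic).2]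
  exact degree_lt_degree (by rwa [FiniteField.X_pow_card_sub_X_natDegree_eq F hq])

theorem natDegree_C_mul_X_add_C_pow_add_C_le (a b d : F) (m : ℕ) :
    ((C a * X + C b) ^ m + C d).natDegree ≤ m := by
  refine natDegree_add_le_of_degree_le ?_ (by simp)
  simpa using natDegree_pow_le_of_le m (natDegree_linear_le (a := a) (b := b))

open Classical in
theorem card_support_C_mul_X_pow_add_C {a : F} (ha : a ≠ 0) {k : ℕ} (hk : k ≠ 0) (d : F) :
    #(C a * X ^ k + C d).support = if d = 0 then 1 else 2 := by
  split_ifs with hd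
  · simp [hd, support_C_mul_X_pow _ ha]
  · simpa using card_support_binomial hk ha hd (m := 0)

theorem isCarlitzRep_carlitzRank {q : ℕ} {f : F[X]}
    (h : carlitzRank q f ≠ 0) : IsCarlitzRep q f (carlitzRank q f) :=
  Nat.sInf_mem (Set.nonempty_iff_ne_empty.2 fun he => h (Nat.sInf_eq_zero.2 (Or.inr he)))

end

theorem weight_of_carlitzRank_one_general {p : ℕ} [Fact p.Prime] (hp : Odd p)
    {F : Type*} [Field F] [Fintype F] [CharP F p] (f : F[X])
    (hrank : carlitzRank (Fintype.card F) f = 1) :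
    polyWeight (Fintype.card F) f ∈
      ({1, 2, Fintype.card F - Fintype.card F / p,
        Fintype.card F - Fintype.card F / p - 1} : Set ℕ) := by
  obtain ⟨⟨n, hn⟩, -, hq⟩ := FiniteField.card F p
  simp only [PNat.mk_coe] at hq
  have hrep := isCarlitzRep_carlitzRank (by omega : carlitzRank (Fintype.card F) f ≠ 0)
  rw [hrank, hq] at hrep
  obtain ⟨a, ha0, -, hdvd⟩ := hrep
  simp only [carlitzChain, zero_add] at hdvd
  have hp3 : 3 ≤ p := by
    have := (Fact.out : p.Prime).two_le
    have := Nat.odd_iff.mp hp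
    omega
  have hq3 : 3 ≤ p ^ n := hp3.trans (Nat.le_self_pow hn.ne' p)
  rw [hq, polyWeight_eq_card_support_of_dvd_sub (by omega) hdvd
    ((natDegree_C_mul_X_add_C_pow_add_C_le _ _ _ _).trans_lt (by omega))]
  by_cases ha1 : a 1 = 0
  · rw [ha1, C_0, add_zero, mul_pow, ← C_pow,
      card_support_C_mul_X_pow_add_C (pow_ne_zero _ ha0) (by omega)]
    split_ifs <;> simp
  · rcases card_eq_or_eq_sub_one_of_erase_eq
        (support_C_mul_X_add_C_pow_char_pow_sub_two_add_C_erase_zero hn.ne' ha0 ha1 (a 2))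
        (by simp only [mem_filter, mem_range, zero_add, Nat.dvd_one]; omega) with h | h <;>
      simp only [h, card_filter_range_sub_one_not_dvd_succ (dvd_pow_self p hn.ne') (by omega),
        Set.mem_insert_iff, Set.mem_singleton_iff, or_true, true_or]

/-- **Proposition.** Let `F` be a finite field with odd characteristic `p` and `q` elements,
and let `f` be a permutation polynomial of `F` with Carlitz rank 1. Then
`ω(f) ∈ {1, 2, q - q/p, q - q/p - 1}`. -/
theorem weight_of_carlitzRank_one {p : ℕ} [Fact p.Prime] (hp : Odd p)
    {F : Type*} [Field F] [Fintype F] [CharP F p] (f : F[X])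
    (hperm : Function.Bijective fun x : F => f.eval x)
    (hrank : carlitzRank (Fintype.card F) f = 1) :
    polyWeight (Fintype.card F) f ∈
      ({1, 2, Fintype.card F - Fintype.card F / p,
        Fintype.card F - Fintype.card F / p - 1} : Set ℕ) :=
  weight_of_carlitzRank_one_general hp f hrank
end

section
/- Let f ∈ F_q[x] be a permutation polynomial of F_q with Carlitz rank Crk(f) = 2. Then there exist elements a_0, a_1, a_2, a_3 ∈ F_q with a_0 ≠ 0 and a_2 ≠ 0 such that f(x) ≡ a_2^{−1} · Σ_{i=1}^{q−2} x^i (−a_0)^i [ (a_1 − i a_2^{−1})(a_1 + a_2^{−1})^{q−2−i} − a_1^{q−1−i} ] + c (mod x^q − x), where c = a_3 + a_2^{−1} [ a_1 (a_1 + a_2^{−1})^{q−2} + 1 − a_1^{q−1} ]. -/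
open Polynomial

/-! For `q > 2` the map `t ↦ t ^ (q - 2)` is inversion on `F_q` (with `0 ↦ 0`), so modulo
`X ^ q - X` a rank-two chain is the function `x ↦ (u⁻¹ + a₂)⁻¹ + a₃` with `u = a₀ x + a₁`.
Away from its two poles this Möbius map has the partial-fraction form
`a₂⁻¹ (1 - a₂⁻¹ (u + a₂⁻¹)⁻¹)`, and the indicator-like powers `(u + a₂⁻¹) ^ (q - 1)` and
`u ^ (q - 1)` repair the values at `u = 0` and `u = -a₂⁻¹`. The coefficients then come from
`(X - c) ^ (q - 1) = ∑ c ^ (q - 1 - i) X ^ i`, a geometric sum because `(X - c) ^ q = X ^ q - c ^ q`,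
and from its derivative `(X - c) ^ (q - 2) = -∑ (i + 1) c ^ (q - 2 - i) X ^ i`. -/

open Finset

theorem Finset.sum_range_succ_eq_add_sum_Icc {M : Type*} [AddCommMonoid M] (f : ℕ → M) (n : ℕ) :
    ∑ i ∈ range (n + 1), f i = f 0 + ∑ i ∈ Icc 1 n, f i := by
  rw [sum_range_eq_add_Ico f (by omega), Ico_add_one_right_eq_Icc]

theorem Fintype.exists_card_eq_add_two (α : Type*) [Fintype α] [Nontrivial α] :
    ∃ n, Fintype.card α = n + 2 :=
  Nat.exists_eq_add_of_le' Fintype.one_lt_card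

theorem inv_inv_add_eq {K : Type*} [Field K] {a : K} (ha : a ≠ 0) (u : K) :
    (u⁻¹ + a)⁻¹ = a⁻¹ * (1 + (u + a⁻¹) * (u + a⁻¹)⁻¹ - a⁻¹ * (u + a⁻¹)⁻¹ - u * u⁻¹) := by
  rcases eq_or_ne u 0 with rfl | hu
  · simp [ha]
  rcases eq_or_ne (u + a⁻¹) 0 with hua | hua
  · rw [hua, eq_neg_of_add_eq_zero_left hua]
    simp [ha]
  · have : u⁻¹ + a ≠ 0 := by
      contrapose! hua
      field_simp at hua ⊢
      linear_combination hua
    field_simp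
    ring

namespace FiniteField

variable {F : Type*} [Field F] [Fintype F]

local notation "q" => Fintype.card F

theorem X_pow_card_sub_X_dvd_iff {g : F[X]} :
    (X ^ q - X : F[X]) ∣ g ↔ ∀ x, g.eval x = 0 := by
  refine ⟨fun ⟨k, hk⟩ x ↦ by simp [hk, pow_card], fun h ↦ ?_⟩
  rcases eq_or_ne g 0 with rfl | hg
  · exact dvd_zero _
  have hmonic : (X ^ q - X : F[X]).Monic :=
    monic_X_pow_sub (by rw [degree_X]; exact_mod_cast Fintype.one_lt_card)
  have hroots : Multiset.card (X ^ q - X : F[X]).roots = (X ^ q - X : F[X]).natDegree := by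
    rw [roots_X_pow_card_sub_X, X_pow_card_sub_X_natDegree_eq F Fintype.one_lt_card, card_val,
      card_univ]
  rw [← prod_multiset_X_sub_C_of_monic_of_roots_card_eq hmonic hroots, roots_X_pow_card_sub_X,
    Multiset.prod_X_sub_C_dvd_iff_le_roots hg, Multiset.le_iff_subset univ.nodup]
  exact fun x _ ↦ (mem_roots hg).2 (h x)

theorem X_pow_card_sub_X_dvd_sub_iff {g h : F[X]} :
    (X ^ q - X : F[X]) ∣ g - h ↔ ∀ x, g.eval x = h.eval x := by
  simp only [X_pow_card_sub_X_dvd_iff, eval_sub, sub_eq_zero]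

theorem X_sub_C_pow_card_sub_one (a : F) :
    (X - C a) ^ (q - 1) = ∑ i ∈ range q, C (a ^ (q - 1 - i)) * X ^ i := by
  refine mul_right_cancel₀ (X_sub_C_ne_zero a) ?_
  calc (X - C a) ^ (q - 1) * (X - C a) = expand F q (X - C a) := by
        rw [pow_sub_one_mul Fintype.card_ne_zero, expand_card]
    _ = X ^ q - C a ^ q := by rw [map_sub, expand_X, expand_C, ← C_pow, pow_card]
    _ = _ := by
        rw [← geom_sum₂_mul]
        simp only [C_pow, mul_comm]

theorem X_sub_C_pow_card_sub_two (a : F) :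
    (X - C a) ^ (q - 2) = -∑ i ∈ range (q - 1), C (a ^ (q - 2 - i) * (i + 1)) * X ^ i := by
  have h := congrArg derivative (X_sub_C_pow_card_sub_one a)
  have hq := cast_card_eq_zero F
  obtain ⟨n, hn⟩ := Fintype.exists_card_eq_add_two F
  rw [hn] at h hq ⊢
  rw [derivative_X_sub_C_pow, derivative_sum, sum_range_succ'] at h
  have hn₁ : ((n + 1 : ℕ) : F) = -1 := by push_cast at hq ⊢; linear_combination hq
  simp only [derivative_C_mul_X_pow, Nat.add_sub_cancel, Nat.add_sub_add_right,
    show n + 2 - 1 = n + 1 by omega, hn₁, Nat.cast_zero, mul_zero, C_0, zero_mul, add_zero,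
    Nat.cast_add_one, C_neg, C_1, neg_one_mul] at h ⊢
  rw [← h, neg_neg]

theorem neg_pow_card_sub_one (t : F) : (-t) ^ (q - 1) = t ^ (q - 1) := by
  rw [neg_pow, pow_card_sub_one_eq_one _ (neg_ne_zero.2 one_ne_zero), one_mul]

theorem neg_pow_card_sub_two (t : F) : (-t) ^ (q - 2) = -t ^ (q - 2) := by
  have h := pow_card_sub_one_eq_one (-1 : F) (neg_ne_zero.2 one_ne_zero)
  obtain ⟨n, hn⟩ := Fintype.exists_card_eq_add_two F
  rw [hn, show n + 2 - 1 = n + 1 by omega, pow_succ] at h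
  rw [neg_pow, hn, Nat.add_sub_cancel]
  linear_combination (-t ^ n) * h

theorem pow_card_sub_two_eq_inv (hq : q ≠ 2) (t : F) : t ^ (q - 2) = t⁻¹ := by
  have := Fintype.one_lt_card (α := F)
  rcases eq_or_ne t 0 with rfl | ht
  · rw [inv_zero, zero_pow (by omega)]
  · refine eq_inv_of_mul_eq_one_left ?_
    rw [← pow_succ, show q - 2 + 1 = q - 1 by omega, pow_card_sub_one_eq_one t ht]

theorem sum_range_carlitz_coeff_mul_pow (a b y : F) :
    ∑ i ∈ range (q - 1), ((a - i * b) * (a + b) ^ (q - 2 - i) - a ^ (q - 1 - i)) * y ^ i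
      = (y - (a + b)) ^ (q - 1) + b * (y - (a + b)) ^ (q - 2) - (y - a) ^ (q - 1) := by
  have hs₁ := congrArg (eval y) (X_sub_C_pow_card_sub_one (a + b))
  have hs₂ := congrArg (eval y) (X_sub_C_pow_card_sub_two (a + b))
  have ha := congrArg (eval y) (X_sub_C_pow_card_sub_one a)
  simp only [eval_pow, eval_sub, eval_neg, eval_X, eval_C, eval_finsetSum, eval_mul] at hs₁ hs₂ ha
  rw [hs₁, hs₂, ha]
  obtain ⟨n, hn⟩ := Fintype.exists_card_eq_add_two F
  simp only [hn, Nat.add_sub_cancel, show n + 2 - 1 = n + 1 by omega, sum_range_succ _ (n + 1),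
    Nat.sub_self, pow_zero, one_mul]
  have hterm : ∀ i ∈ range (n + 1), ((a - i * b) * (a + b) ^ (n - i) - a ^ (n + 1 - i)) * y ^ i
      = (a + b) ^ (n + 1 - i) * y ^ i + b * -((a + b) ^ (n - i) * (i + 1) * y ^ i)
        - a ^ (n + 1 - i) * y ^ i := by
    intro i hi
    rw [show n + 1 - i = n - i + 1 by grind]
    ring
  rw [sum_congr rfl hterm, sum_sub_distrib, sum_add_distrib, ← mul_sum, sum_neg_distrib]
  ring

theorem sum_Icc_carlitz_coeff_mul_pow (a₀ a₁ b x : F) :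
    ∑ i ∈ Icc 1 (q - 2), (-a₀) ^ i * ((a₁ - i * b) * (a₁ + b) ^ (q - 2 - i) - a₁ ^ (q - 1 - i)) * x ^ i
      = (a₀ * x + a₁ + b) ^ (q - 1) - b * (a₀ * x + a₁ + b) ^ (q - 2) - (a₀ * x + a₁) ^ (q - 1)
        - (a₁ * (a₁ + b) ^ (q - 2) - a₁ ^ (q - 1)) := by
  have h := sum_range_carlitz_coeff_mul_pow a₁ b (-(a₀ * x))
  have hrange : range (q - 1) = range (q - 2 + 1) := by
    have := Fintype.one_lt_card (α := F)
    congr 1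
    omega
  rw [hrange, sum_range_succ_eq_add_sum_Icc, show -(a₀ * x) - (a₁ + b) = -(a₀ * x + a₁ + b) by ring,
    show -(a₀ * x) - a₁ = -(a₀ * x + a₁) by ring, neg_pow_card_sub_one, neg_pow_card_sub_one,
    neg_pow_card_sub_two] at h
  simp only [pow_zero, mul_one, Nat.cast_zero, zero_mul, sub_zero, Nat.sub_zero] at h
  rw [sum_congr rfl fun i _ ↦ by rw [← neg_mul, mul_pow, mul_left_comm, ← mul_assoc]] at h
  linear_combination h

theorem pow_card_sub_two_add_pow_card_sub_two_eq {a : F} (ha : a ≠ 0) (u : F) :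
    (u ^ (q - 2) + a) ^ (q - 2)
      = a⁻¹ * (1 + (u + a⁻¹) ^ (q - 1) - a⁻¹ * (u + a⁻¹) ^ (q - 2) - u ^ (q - 1)) := by
  by_cases hq : q = 2
  · have : a = 1 := by simpa [hq] using pow_card_sub_one_eq_one a ha
    simp [hq, this]
  · have := Fintype.one_lt_card (α := F)
    simp only [show q - 1 = q - 2 + 1 by omega, pow_succ, pow_card_sub_two_eq_inv hq]
    rw [inv_inv_add_eq ha]
    ring

end FiniteField

theorem isCarlitzRep_of_carlitzRank_eq {F : Type*} [Field F] {q n : ℕ} {f : F[X]}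
    (h : carlitzRank q f = n) (hn : n ≠ 0) : IsCarlitzRep q f n :=
  h ▸ Nat.sInf_mem (Nat.nonempty_of_pos_sInf (h ▸ Nat.pos_of_ne_zero hn))

theorem eval_carlitzChain_two {F : Type*} [Field F] (q : ℕ) (a : ℕ → F) (x : F) :
    (carlitzChain q a 2).eval x = ((a 0 * x + a 1) ^ (q - 2) + a 2) ^ (q - 2) + a 3 := by
  simp [carlitzChain]

open FiniteField in
theorem exists_explicit_form_of_carlitzRank_two_general {F : Type*} [Field F] [Fintype F] (f : F[X])
    (hrank : carlitzRank (Fintype.card F) f = 2) :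
    ∃ a₀ a₁ a₂ a₃ : F, a₀ ≠ 0 ∧ a₂ ≠ 0 ∧
      (X ^ Fintype.card F - X : F[X]) ∣
        f - (C a₂⁻¹ * (∑ i ∈ Finset.Icc 1 (Fintype.card F - 2),
              C ((-a₀) ^ i * ((a₁ - (i : F) * a₂⁻¹) * (a₁ + a₂⁻¹) ^ (Fintype.card F - 2 - i)
                - a₁ ^ (Fintype.card F - 1 - i))) * X ^ i)
          + C (a₃ + a₂⁻¹ * (a₁ * (a₁ + a₂⁻¹) ^ (Fintype.card F - 2) + 1
                - a₁ ^ (Fintype.card F - 1)))) := by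
  obtain ⟨a, ha₀, ha, hf⟩ := isCarlitzRep_of_carlitzRank_eq hrank two_ne_zero
  have ha₂ : a 2 ≠ 0 := ha 2 le_rfl le_rfl
  refine ⟨a 0, a 1, a 2, a 3, ha₀, ha₂, ?_⟩
  rw [X_pow_card_sub_X_dvd_sub_iff] at hf ⊢
  intro x
  rw [hf, eval_carlitzChain_two, pow_card_sub_two_add_pow_card_sub_two_eq ha₂]
  simp only [eval_add, eval_mul, eval_C, eval_finsetSum, eval_pow, eval_X,
    sum_Icc_carlitz_coeff_mul_pow]
  ring

/-- **Lemma.** If `f` is a permutation polynomial of `F_q` with Carlitz rank 2, then there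
exist `a₀, a₁, a₂, a₃ ∈ F_q` with `a₀ ≠ 0`, `a₂ ≠ 0` such that
`f(x) ≡ a₂⁻¹ ∑_{i=1}^{q-2} x^i (-a₀)^i [(a₁ - i a₂⁻¹)(a₁ + a₂⁻¹)^{q-2-i} - a₁^{q-1-i}] + c`
`(mod x^q - x)`, where `c = a₃ + a₂⁻¹[a₁(a₁ + a₂⁻¹)^{q-2} + 1 - a₁^{q-1}]`. -/
theorem exists_explicit_form_of_carlitzRank_two {F : Type*} [Field F] [Fintype F] (f : F[X])
    (hperm : Function.Bijective fun x : F => f.eval x)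
    (hrank : carlitzRank (Fintype.card F) f = 2) :
    ∃ a₀ a₁ a₂ a₃ : F, a₀ ≠ 0 ∧ a₂ ≠ 0 ∧
      (X ^ Fintype.card F - X : F[X]) ∣
        f - (C a₂⁻¹ * (∑ i ∈ Finset.Icc 1 (Fintype.card F - 2),
              C ((-a₀) ^ i * ((a₁ - (i : F) * a₂⁻¹) * (a₁ + a₂⁻¹) ^ (Fintype.card F - 2 - i)
                - a₁ ^ (Fintype.card F - 1 - i))) * X ^ i)
          + C (a₃ + a₂⁻¹ * (a₁ * (a₁ + a₂⁻¹) ^ (Fintype.card F - 2) + 1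
                - a₁ ^ (Fintype.card F - 1)))) :=
  exists_explicit_form_of_carlitzRank_two_general f hrank
end

section
/- Let Ω be a set, let l and k be nonnegative integers, and let g_1, g_2 : ℤ → Ω be periodic functions with periods n_1 and n_2 respectively. If the restriction of g_1 to {1, …, n_1} and the restriction of g_2 to {1, …, n_2} are injective, and gcd(n_1, n_2) = 1, then #{ i ∈ ℤ : k+1 ≤ i ≤ k + l·n_1 n_2 and g_1(i) = g_2(i) } ≤ l · min(n_1, n_2). -/
/-!
A periodic function that is injective on one period takes equal values exactly at points congruent
modulo its period. So if `g₁ i = g₂ i` and `g₁ j = g₂ j` with `i ≡ j [ZMOD n₂]`, then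
`g₁ i = g₁ j`, hence `i ≡ j [ZMOD n₁]`, and by coprimality `i ≡ j [ZMOD n₁ n₂]`. In each of the
`l` blocks of length `n₁ n₂` the agreement points therefore have pairwise distinct residues
modulo `n₂`, and symmetrically modulo `n₁`.
-/

open Finset Function

namespace Function.Periodic

variable {α : Type*} {g : ℤ → α} {n : ℤ}

theorem map_eq_of_modEq (hg : Periodic g n) {i j : ℤ} (h : i ≡ j [ZMOD n]) : g i = g j := by
  obtain ⟨t, rfl⟩ := Int.modEq_iff_add_fac.1 h
  rw [mul_comm]
  exact (hg.int_mul t i).symm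

theorem modEq_of_map_eq (hg : Periodic g n) (hn : 0 < n) (hinj : Set.InjOn g (Set.Icc 1 n))
    {i j : ℤ} (h : g i = g j) : i ≡ j [ZMOD n] := by
  set r : ℤ → ℤ := fun x => (x - 1) % n + 1
  have hr_modEq (x : ℤ) : r x ≡ x [ZMOD n] := by
    simpa [r] using (Int.mod_modEq (x - 1) n).add_right 1
  have hr_mem (x : ℤ) : r x ∈ Set.Icc 1 n := by
    have := Int.emod_nonneg (x - 1) hn.ne'
    have := Int.emod_lt_of_pos (x - 1) hn
    simp only [r, Set.mem_Icc]
    omega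
  have hr_eq : r i = r j :=
    hinj (hr_mem i) (hr_mem j) (by rw [hg.map_eq_of_modEq (hr_modEq i),
      hg.map_eq_of_modEq (hr_modEq j), h])
  exact (hr_modEq i).symm.trans (hr_eq ▸ hr_modEq j)

end Function.Periodic

theorem Int.modEq_mul_of_apply_eq_apply {α : Type*} {g₁ g₂ : ℤ → α} {n₁ n₂ : ℕ}
    (hg₁ : ∀ {i j}, g₁ i = g₁ j → i ≡ j [ZMOD n₁]) (hg₂ : Periodic g₂ n₂)
    (hcop : n₁.Coprime n₂) {i j : ℤ} (hi : g₁ i = g₂ i) (hj : g₁ j = g₂ j)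
    (h : i ≡ j [ZMOD n₂]) : i ≡ j [ZMOD n₁ * n₂] := by
  have h₁ : g₁ i = g₁ j := by rw [hi, hj, hg₂.map_eq_of_modEq h]
  exact (Int.modEq_and_modEq_iff_modEq_mul (by simpa using hcop)).1 ⟨hg₁ h₁, h⟩

theorem Int.card_le_mul_of_modEq_imp_modEq {s : Finset ℤ} {a N : ℤ} {l m : ℕ} (hm : 0 < m)
    (hs : s ⊆ Icc (a + 1) (a + l * N))
    (h : ∀ i ∈ s, ∀ j ∈ s, i ≡ j [ZMOD m] → i ≡ j [ZMOD N]) : #s ≤ l * m := by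
  -- a point of `s` is determined by its block of length `N` and its residue modulo `m`
  let f : ℤ → ℤ × ℤ := fun i => ((i - (a + 1)) / N, i % m)
  have hmaps : Set.MapsTo f s ↑(Ico (0 : ℤ) l ×ˢ Ico (0 : ℤ) m) := by
    intro i hi
    obtain ⟨hai, hil⟩ := mem_Icc.1 (hs hi)
    have hN : 0 < N := by nlinarith
    simp only [f, coe_product, Set.mem_prod, mem_coe, mem_Ico]
    refine ⟨⟨Int.ediv_nonneg (by omega) hN.le, (Int.ediv_lt_iff_lt_mul hN).2 (by linarith)⟩,
      Int.emod_nonneg _ (by omega), Int.emod_lt_of_pos _ (by omega)⟩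
  have hinj : Set.InjOn f s := by
    intro i hi j hj hij
    obtain ⟨hdiv, hmod⟩ := Prod.mk_inj.1 hij
    have hmodN : (i - (a + 1)) % N = (j - (a + 1)) % N := ((h i hi j hj hmod).sub_right _).eq
    have hi' := Int.mul_ediv_add_emod (i - (a + 1)) N
    rw [hdiv, hmodN, Int.mul_ediv_add_emod] at hi'
    linarith
  calc #s ≤ #(Ico (0 : ℤ) l ×ˢ Ico (0 : ℤ) m) := card_le_card_of_injOn f hmaps hinj
    _ = l * m := by simp

/-- **Corollary.** Let `g₁, g₂ : ℤ → Ω` be periodic with coprime positive periods `n₁, n₂`,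
each injective on a fundamental period, and let `l, k` be nonnegative integers. Then the
number of `i ∈ [k+1, k + l·n₁n₂]` with `g₁ i = g₂ i` is at most `l · min(n₁, n₂)`. -/
theorem card_agree_le_of_periodic_coprime_injective {Ω : Type*} [DecidableEq Ω]
    (g₁ g₂ : ℤ → Ω) (n₁ n₂ : ℕ) (hn₁ : 0 < n₁) (hn₂ : 0 < n₂) (l k : ℕ)
    (hper₁ : ∀ j : ℤ, g₁ (j + n₁) = g₁ j) (hper₂ : ∀ j : ℤ, g₂ (j + n₂) = g₂ j)
    (hinj₁ : Set.InjOn g₁ (Set.Icc (1 : ℤ) n₁)) (hinj₂ : Set.InjOn g₂ (Set.Icc (1 : ℤ) n₂))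
    (hcop : Nat.Coprime n₁ n₂) :
    ((Finset.Icc ((k : ℤ) + 1) ((k : ℤ) + l * n₁ * n₂)).filter fun i => g₁ i = g₂ i).card ≤
      l * min n₁ n₂ := by
  have hsep₁ {i j : ℤ} : g₁ i = g₁ j → i ≡ j [ZMOD n₁] :=
    Periodic.modEq_of_map_eq hper₁ (by exact_mod_cast hn₁) hinj₁
  have hsep₂ {i j : ℤ} : g₂ i = g₂ j → i ≡ j [ZMOD n₂] :=
    Periodic.modEq_of_map_eq hper₂ (by exact_mod_cast hn₂) hinj₂
  rw [mul_min]
  refine le_min (Int.card_le_mul_of_modEq_imp_modEq (a := k) (N := n₂ * n₁) hn₁ ?_ ?_)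
    (Int.card_le_mul_of_modEq_imp_modEq (a := k) (N := n₁ * n₂) hn₂ ?_ ?_)
  · rw [mul_assoc, mul_comm (n₁ : ℤ)]
    exact filter_subset _ _
  · intro i hi j hj h
    exact Int.modEq_mul_of_apply_eq_apply hsep₂ hper₁ hcop.symm
      (mem_filter.1 hi).2.symm (mem_filter.1 hj).2.symm h
  · rw [mul_assoc]
    exact filter_subset _ _
  · intro i hi j hj h
    exact Int.modEq_mul_of_apply_eq_apply hsep₁ hper₂ hcop (mem_filter.1 hi).2
      (mem_filter.1 hj).2 h
end

section
/- Let F_q be a finite field of characteristic p, let γ ∈ F_q \ {0, 1}, let c, d ∈ F_q with c ≠ 0, and let L, M be integers with 0 < M ≤ p. Set C = { i ∈ ℤ : L ≤ i ≤ L + M and γ^{i+1} = i·c + d }. If i_1, i_2, j_1, j_2 ∈ C satisfy i_1 < i_2, j_1 < j_2 and i_2 − i_1 = j_2 − j_1, then i_1 = j_1 and i_2 = j_2. In other words, the differences of distinct pairs of elements of C are pairwise distinct. -/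
/-- Let `F` be a finite field of characteristic `p`, `γ ∈ F \ {0, 1}`, `c, d ∈ F` with
`c ≠ 0`, and `L, M ∈ ℤ` with `0 < M ≤ p`. In the set
`C = {L ≤ i ≤ L + M : γ^{i+1} = i·c + d}`, the differences of distinct pairs of elements
are pairwise distinct: if `i₁ < i₂`, `j₁ < j₂` in `C` with `i₂ - i₁ = j₂ - j₁`, then
`i₁ = j₁` and `i₂ = j₂`. -/
theorem differences_distinct {p : ℕ} [Fact p.Prime]
    {F : Type*} [Field F] [Fintype F] [CharP F p]
    (γ c d : F) (hγ0 : γ ≠ 0) (hγ1 : γ ≠ 1) (hc : c ≠ 0)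
    (L M : ℤ) (hM0 : 0 < M) (hMp : M ≤ p)
    (i₁ i₂ j₁ j₂ : ℤ)
    (hi₁ : i₁ ∈ {i : ℤ | L ≤ i ∧ i ≤ L + M ∧ γ ^ (i + 1) = (i : F) * c + d})
    (hi₂ : i₂ ∈ {i : ℤ | L ≤ i ∧ i ≤ L + M ∧ γ ^ (i + 1) = (i : F) * c + d})
    (hj₁ : j₁ ∈ {i : ℤ | L ≤ i ∧ i ≤ L + M ∧ γ ^ (i + 1) = (i : F) * c + d})
    (hj₂ : j₂ ∈ {i : ℤ | L ≤ i ∧ i ≤ L + M ∧ γ ^ (i + 1) = (i : F) * c + d})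
    (hlt : i₁ < i₂) (hlt' : j₁ < j₂) (hdiff : i₂ - i₁ = j₂ - j₁) :
    i₁ = j₁ ∧ i₂ = j₂ := by
  obtain ⟨hL1, hU1, he1⟩ := hi₁
  obtain ⟨hL2, hU2, he2⟩ := hi₂
  obtain ⟨hL3, hU3, he3⟩ := hj₁
  obtain ⟨hL4, hU4, he4⟩ := hj₂
  set k : ℤ := i₂ - i₁ with hk
  have hk0 : 0 < k := by omega
  have hkM : k ≤ M := by omega
  have E1 : γ ^ (i₁ + 1) * (γ ^ k - 1) = (k : F) * c := by
    have h2 : γ ^ (i₂ + 1) = γ ^ (i₁ + 1) * γ ^ k := by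
      rw [← zpow_add₀ hγ0]; congr 1; omega
    have hkc : (k : F) = (i₂ : F) - (i₁ : F) := by push_cast [hk]; ring
    rw [hkc]
    linear_combination he2 - he1 - h2
  have E2 : γ ^ (j₁ + 1) * (γ ^ k - 1) = (k : F) * c := by
    have h2 : γ ^ (j₂ + 1) = γ ^ (j₁ + 1) * γ ^ k := by
      rw [← zpow_add₀ hγ0]; congr 1; omega
    have hkc : (k : F) = (j₂ : F) - (j₁ : F) := by
      have : k = j₂ - j₁ := hdiff
      rw [this]; push_cast; ring
    rw [hkc]
    linear_combination he4 - he3 - h2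
  -- k is nonzero in F
  have hkF : (k : F) ≠ 0 := by
    intro h0
    have hdvd : (p : ℤ) ∣ k := (CharP.intCast_eq_zero_iff F p k).mp h0
    have hkp : k = p := by
      have := Int.le_of_dvd hk0 hdvd
      omega
    have hγk : γ ^ k = 1 := by
      have hz : γ ^ (i₁ + 1) * (γ ^ k - 1) = 0 := by rw [E1, h0, zero_mul]
      exact sub_eq_zero.mp ((mul_eq_zero.mp hz).resolve_left (zpow_ne_zero _ hγ0))
    have hγp : γ ^ (p : ℕ) = 1 := by
      rw [hkp] at hγk
      rw [← zpow_natCast]; exact hγk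
    apply hγ1
    have hz : (γ - 1) ^ p = 0 := by
      rw [sub_pow_char, hγp, one_pow, sub_self]
    exact sub_eq_zero.mp (pow_eq_zero_iff (Fact.out (p := p.Prime)).ne_zero |>.mp hz)
  have hkc : (k : F) * c ≠ 0 := mul_ne_zero hkF hc
  have hγk1 : γ ^ k - 1 ≠ 0 := by
    intro h
    rw [h, mul_zero] at E1
    exact hkc E1.symm
  have heq : γ ^ (i₁ + 1) = γ ^ (j₁ + 1) :=
    mul_right_cancel₀ hγk1 (E1.trans E2.symm)
  have hij : ((i₁ : F)) = (j₁ : F) := by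
    have : (i₁ : F) * c + d = (j₁ : F) * c + d := by rw [← he1, ← he3, heq]
    have h2 : (i₁ : F) * c = (j₁ : F) * c := by linear_combination this
    exact mul_right_cancel₀ hc h2
  have hdvd : (p : ℤ) ∣ (i₁ - j₁) := by
    apply (CharP.intCast_eq_zero_iff F p _).mp
    push_cast
    rw [hij, sub_self]
  have h1 : i₁ = j₁ := by
    have habs : |i₁ - j₁| < (p : ℤ) := by
      rw [abs_lt]
      constructor <;> omega
    have := Int.eq_zero_of_abs_lt_dvd hdvd habs
    omega
  exact ⟨h1, by omega⟩
end

section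
/- Every permutation polynomial f of the finite field F_q can be represented by a polynomial of the form P_n(x) = (⋯((a_0 x + a_1)^{q−2} + a_2)^{q−2} ⋯ + a_n)^{q−2} + a_{n+1}, with a_1, a_{n+1} ∈ F_q and a_0, a_2, …, a_n ∈ F_q*; that is, there exist such n and coefficients with f(x) ≡ P_n(x) (mod x^q − x). Equivalently, the group of permutations of F_q is generated by the maps x ↦ ax + b (a ≠ 0) together with x ↦ x^{q−2}. -/
open Polynomial

/-! For `q > 2` the map `x ↦ x ^ (q - 2)` is inversion on `F_q`, and the functions computed by
Carlitz chains contain the identity and are stable under post-composition with affine maps (a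
scalar passes through an inversion as its inverse) and with inversion (which either lengthens the
chain or cancels its last inversion). Affine maps and inversion generate the symmetric group:
with `s x = 1 - x` and `ι x = x⁻¹`, one has `swap 0 1 = s ∘ ι ∘ s ∘ ι ∘ s ∘ ι`, and every
transposition is an affine conjugate of `swap 0 1`. Finally, polynomials inducing the same function on `F_q` are
congruent mod `X ^ q - X`; for `q = 2` every permutation is already affine. -/

open Equiv Function

section FiniteField

variable {K : Type*} [Field K] [Fintype K]

theorem X_pow_card_sub_X_dvd_of_forall_eval_eq_zero {p : K[X]} (hp : ∀ x, p.eval x = 0) :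
    X ^ Fintype.card K - X ∣ p := by
  rcases eq_or_ne p 0 with rfl | hp0
  · exact dvd_zero _
  have hmonic : (X ^ Fintype.card K - X : K[X]).Monic :=
    monic_X_pow_sub (by rw [degree_X]; exact_mod_cast Fintype.one_lt_card)
  have hsplit := prod_multiset_X_sub_C_of_monic_of_roots_card_eq hmonic (by
    rw [FiniteField.roots_X_pow_card_sub_X,
      FiniteField.X_pow_card_sub_X_natDegree_eq K Fintype.one_lt_card]
    rfl)
  rw [← hsplit, FiniteField.roots_X_pow_card_sub_X, Multiset.prod_X_sub_C_dvd_iff_le_roots hp0,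
    Multiset.le_iff_subset Finset.univ.nodup]
  exact fun x _ => (mem_roots hp0).mpr (hp x)

theorem pow_card_sub_two_eq_inv (hK : 2 < Fintype.card K) (x : K) :
    x ^ (Fintype.card K - 2) = x⁻¹ := by
  rcases eq_or_ne x 0 with rfl | hx
  · rw [zero_pow (by omega), inv_zero]
  refine eq_inv_of_mul_eq_one_left ?_
  rw [← pow_succ, show Fintype.card K - 2 + 1 = Fintype.card K - 1 by omega,
    FiniteField.pow_card_sub_one_eq_one x hx]

end FiniteField

section Generators

variable (F : Type*) [Field F]

def carlitzGenerators : Set (Perm F) :=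
  {σ | ∃ a b : F, a ≠ 0 ∧ ⇑σ = fun x => a * x + b} ∪ {Equiv.inv F}

variable {F}

theorem inv_mem_carlitzGenerators {σ : Perm F} (hσ : σ ∈ carlitzGenerators F) :
    σ⁻¹ ∈ carlitzGenerators F := by
  rcases hσ with ⟨a, b, ha, hσ⟩ | rfl
  · refine Or.inl ⟨a⁻¹, -(a⁻¹ * b), inv_ne_zero ha, funext fun y => ?_⟩
    have h := congrFun hσ (σ⁻¹ y)
    rw [← Perm.mul_apply, mul_inv_cancel, Perm.one_apply] at h
    field_simp
    linear_combination -h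
  · exact Or.inr rfl

theorem swap_zero_one_eq_subLeft_inv [DecidableEq F] :
    swap (0 : F) 1 = Equiv.subLeft 1 * Equiv.inv F * Equiv.subLeft 1 * Equiv.inv F *
      Equiv.subLeft 1 * Equiv.inv F := by
  ext y
  simp only [Perm.mul_apply, subLeft_apply, Equiv.inv_apply]
  rcases eq_or_ne y 0 with rfl | hy0
  · simp
  rcases eq_or_ne y 1 with rfl | hy1
  · simp
  rw [swap_apply_of_ne_of_ne hy0 hy1]
  have hy1' : y - 1 ≠ 0 := sub_ne_zero.mpr hy1
  field_simp
  ring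

theorem swap_mem_closure_carlitzGenerators [DecidableEq F] (γ δ : F) :
    swap γ δ ∈ Subgroup.closure (carlitzGenerators F) := by
  rcases eq_or_ne γ δ with rfl | hγδ
  · rw [swap_self]; exact one_mem _
  have hd : δ - γ ≠ 0 := sub_ne_zero.mpr hγδ.symm
  have hinv : Equiv.inv F ∈ Subgroup.closure (carlitzGenerators F) :=
    Subgroup.subset_closure (Or.inr rfl)
  have hsub : Equiv.subLeft (1 : F) ∈ Subgroup.closure (carlitzGenerators F) :=
    Subgroup.subset_closure (Or.inl ⟨-1, 1, by norm_num, funext fun x => by simp; ring⟩)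
  let A : Perm F := (Equiv.mulLeft₀ (δ - γ) hd).trans (Equiv.addRight γ)
  have hA : A ∈ Subgroup.closure (carlitzGenerators F) :=
    Subgroup.subset_closure (Or.inl ⟨δ - γ, γ, hd, rfl⟩)
  have hconj : swap γ δ = A * swap 0 1 * A⁻¹ := by
    rw [← swap_apply_apply]
    congr 1 <;> simp [A]
  rw [hconj, swap_zero_one_eq_subLeft_inv]
  refine mul_mem (mul_mem hA ?_) (inv_mem hA)
  repeat' apply mul_mem
  all_goals assumption

theorem closure_carlitzGenerators [Finite F] : Subgroup.closure (carlitzGenerators F) = ⊤ := by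
  classical
  rw [eq_top_iff, ← Perm.closure_isSwap, Subgroup.closure_le]
  rintro _ ⟨γ, δ, -, rfl⟩
  exact swap_mem_closure_carlitzGenerators γ δ

end Generators

section Chain

variable {F : Type*} [Field F] {q : ℕ}

theorem eval_carlitzChain_zero (a : ℕ → F) (x : F) :
    (carlitzChain q a 0).eval x = a 0 * x + a 1 := by
  simp [carlitzChain]

theorem eval_carlitzChain_succ (a : ℕ → F) (n : ℕ) (x : F) :
    (carlitzChain q a (n + 1)).eval x = (carlitzChain q a n).eval x ^ (q - 2) + a (n + 2) := by
  simp [carlitzChain]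

theorem carlitzChain_congr {a b : ℕ → F} {n : ℕ} (h : ∀ i ≤ n + 1, a i = b i) :
    carlitzChain q a n = carlitzChain q b n := by
  induction n with
  | zero => simp [carlitzChain, h 0 (by omega), h 1 (by omega)]
  | succ n ih => simp [carlitzChain, ih fun i hi => h i (by omega), h (n + 2) le_rfl]

theorem carlitzChain_update_last (a : ℕ → F) (n : ℕ) (β : F) :
    carlitzChain q (update a (n + 1) (a (n + 1) + β)) n = carlitzChain q a n + C β := by
  cases n with
  | zero => simp [carlitzChain]; ring
  | succ n =>
    have hlow :
        carlitzChain q (update a (n + 1 + 1) (a (n + 1 + 1) + β)) n = carlitzChain q a n :=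
      carlitzChain_congr fun i hi => update_of_ne (by omega) _ _
    rw [carlitzChain, carlitzChain, hlow, update_self, C_add]
    ring

variable (q) in
def IsCarlitzFun (g : F → F) : Prop :=
  ∃ n, ∃ a : ℕ → F, a 0 ≠ 0 ∧ (∀ i, 2 ≤ i → i ≤ n → a i ≠ 0) ∧
    ∀ x, (carlitzChain q a n).eval x = g x

theorem isCarlitzFun_affine {α : F} (hα : α ≠ 0) (β : F) : IsCarlitzFun q fun x => α * x + β :=
  ⟨0, fun i => if i = 0 then α else β, by simpa, by omega, eval_carlitzChain_zero _⟩

variable (hpow : ∀ x : F, x ^ (q - 2) = x⁻¹)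
include hpow

-- `α * (P⁻¹ + a) = (α⁻¹ * P)⁻¹ + α * a`: the scalar passes each inversion as its inverse.
theorem exists_eval_carlitzChain_eq_mul (a : ℕ → F) (n : ℕ) {α : F} (hα : α ≠ 0) :
    ∃ c : ℕ → F, (∀ i, c i ≠ 0) ∧
      ∀ x, (carlitzChain q (c * a) n).eval x = α * (carlitzChain q a n).eval x := by
  induction n generalizing α with
  | zero => exact ⟨fun _ => α, fun _ => hα, fun x => by simp [eval_carlitzChain_zero]; ring⟩
  | succ n ih =>
    obtain ⟨c, hc, hca⟩ := ih (inv_ne_zero hα)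
    refine ⟨update c (n + 2) α, fun i => ?_, fun x => ?_⟩
    · rcases eq_or_ne i (n + 2) with rfl | hi
      · simpa
      · simpa [hi] using hc i
    have hlow : carlitzChain q (update c (n + 2) α * a) n = carlitzChain q (c * a) n :=
      carlitzChain_congr fun i hi => by simp [update_of_ne (show i ≠ n + 2 by omega)]
    simp only [eval_carlitzChain_succ, hpow, hlow, hca, Pi.mul_apply, update_self, mul_inv, inv_inv]
    ring

theorem IsCarlitzFun.affine_comp {g : F → F} (hg : IsCarlitzFun q g) {α : F} (hα : α ≠ 0)
    (β : F) : IsCarlitzFun q fun x => α * g x + β := by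
  obtain ⟨n, a, ha0, ha, hga⟩ := hg
  obtain ⟨c, hc, hca⟩ := exists_eval_carlitzChain_eq_mul hpow a n hα
  refine ⟨n, update (c * a) (n + 1) ((c * a) (n + 1) + β), ?_, fun i h2 hi => ?_, fun x => ?_⟩
  · simpa [update_of_ne (show 0 ≠ n + 1 by omega)] using mul_ne_zero (hc 0) ha0
  · simpa [update_of_ne (show i ≠ n + 1 by omega)] using mul_ne_zero (hc i) (ha i h2 hi)
  · rw [carlitzChain_update_last, eval_add, eval_C, hca, hga]

theorem IsCarlitzFun.inv_comp {g : F → F} (hg : IsCarlitzFun q g) :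
    IsCarlitzFun q fun x => (g x)⁻¹ := by
  obtain ⟨n, a, ha0, ha, hga⟩ := hg
  by_cases hcancel : ∃ k, n = k + 1 ∧ a (k + 2) = 0
  · obtain ⟨k, rfl, hk⟩ := hcancel
    refine ⟨k, a, ha0, fun i h2 hi => ha i h2 (by omega), fun x => ?_⟩
    show _ = (g x)⁻¹
    rw [← hga, eval_carlitzChain_succ, hpow, hk, add_zero, inv_inv]
  refine ⟨n + 1, update a (n + 2) 0, by simpa, fun i h2 hi => ?_, fun x => ?_⟩
  · rw [update_of_ne (by omega)]
    rcases Nat.lt_or_ge i (n + 1) with hi' | hi'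
    · exact ha i h2 (by omega)
    · obtain ⟨k, rfl⟩ : ∃ k, n = k + 1 := ⟨n - 1, by omega⟩
      obtain rfl : i = k + 2 := by omega
      exact fun hk => hcancel ⟨k, rfl, hk⟩
  · have hlow : carlitzChain q (update a (n + 2) 0) n = carlitzChain q a n :=
      carlitzChain_congr fun i hi => update_of_ne (by omega) _ _
    rw [eval_carlitzChain_succ, hpow, update_self, add_zero, hlow, hga]

theorem isCarlitzFun_of_mem_closure {σ : Perm F}
    (hσ : σ ∈ Subgroup.closure (carlitzGenerators F)) : IsCarlitzFun q σ := by
  have step : ∀ τ ∈ carlitzGenerators F, ∀ ρ : Perm F, IsCarlitzFun q ρ →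
      IsCarlitzFun q ⇑(τ * ρ) := by
    rintro τ (⟨α, β, hα, hτ⟩ | rfl) ρ hρ
    · rw [Perm.coe_mul, hτ]
      exact hρ.affine_comp hpow hα β
    · exact hρ.inv_comp hpow
  induction hσ using Subgroup.closure_induction_left with
  | one =>
    convert isCarlitzFun_affine (q := q) one_ne_zero (0 : F) using 1
    ext x
    simp
  | mul_left τ hτ ρ _ ih => exact step τ hτ ρ ih
  | inv_mul_cancel τ hτ ρ _ ih => exact step τ⁻¹ (inv_mem_carlitzGenerators hτ) ρ ih

end Chain

theorem isCarlitzFun_of_card_eq_two {F : Type*} [Field F] [Fintype F] (hF : Fintype.card F = 2)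
    {g : F → F} (hg : Injective g) : IsCarlitzFun (Fintype.card F) g := by
  have hbool : ∀ x : F, x = 0 ∨ x = 1 := by
    intro x
    have hx : x * (x - 1) = 0 := by
      linear_combination (hF ▸ FiniteField.pow_card x : x ^ 2 = x)
    exact (mul_eq_zero.mp hx).imp id sub_eq_zero.mp
  have hslope : g 1 - g 0 ≠ 0 := sub_ne_zero.mpr (hg.ne one_ne_zero)
  convert isCarlitzFun_affine hslope (g 0) using 2 with x
  rcases hbool x with rfl | rfl <;> ring

/-- **(Carlitz.)** Every permutation polynomial `f` of the finite field `F_q` is congruent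
mod `x^q - x` to some `P_n(x) = (⋯((a₀x + a₁)^{q-2} + a₂)^{q-2} ⋯ + a_n)^{q-2} + a_{n+1}`
with `a₁, a_{n+1} ∈ F_q` and `a₀, a₂, …, a_n ∈ F_q*`. -/
theorem exists_carlitz_representation {F : Type*} [Field F] [Fintype F] (f : F[X])
    (hperm : Function.Bijective fun x : F => f.eval x) :
    ∃ n : ℕ, IsCarlitzRep (Fintype.card F) f n := by
  obtain ⟨n, a, ha0, ha, hfa⟩ : IsCarlitzFun (Fintype.card F) fun x => f.eval x := by
    obtain hF | hF : Fintype.card F = 2 ∨ 2 < Fintype.card F := by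
      have := Fintype.one_lt_card (α := F); omega
    · exact isCarlitzFun_of_card_eq_two hF hperm.injective
    · have hσ : Equiv.ofBijective _ hperm ∈ Subgroup.closure (carlitzGenerators F) := by
        rw [closure_carlitzGenerators]; trivial
      exact isCarlitzFun_of_mem_closure (pow_card_sub_two_eq_inv hF) hσ
  refine ⟨n, a, ha0, ha, X_pow_card_sub_X_dvd_of_forall_eval_eq_zero fun x => ?_⟩
  rw [eval_sub, hfa, sub_self]
end
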